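/- For every non-erasing morphism Ψ : A* → B* and nonempty words u ∈ B+, w ∈ A+, binom(Ψ(w), u) = Σ_{k=1}^{|u|} Σ_{u = u1···uk, each ui nonempty} Σ_{a1,...,ak ∈ A} binom(Ψ(a1), u1) ··· binom(Ψ(ak), uk) · binom(w, a1···ak). -/

import Mathlib

/-!
Both sides satisfy the same recursion in `w`. Since `Ψ (a :: w) = Ψ a ++ Ψ w`, an occurrence
of `u` in it is an occurrence of a prefix `u.take i` in `Ψ a` followed by one of `u.drop i`
in `Ψ w`. On the right, `binom (a :: w) v = binom w v + [v starts with a] · binom w v.tail`: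
the first term gives the right-hand side for `w`, and in the second the letter `a` is forced
as `a₁`, so splitting the compositions of `|u|` by their first block leaves `binom (Ψ a) u₁`
times the right-hand side for `w` and the rest of `u`.
-/

/-- Number of occurrences of the second word as a (scattered) subword of the first. -/
def binom {α : Type*} [DecidableEq α] : List α → List α → ℕ
  | _, [] => 1
  | [], _ :: _ => 0
  | a :: u, b :: v => binom u (b :: v) + if a = b then binom u v else 0

open Finset

section Binom

variable {α : Type*} [DecidableEq α]

@[simp] lemma binom_nil_right (x : List α) : binom x [] = 1 := by cases x <;> rfl

lemma binom_cons_cons (a b : α) (x v : List α) :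
    binom (a :: x) (b :: v) = binom x (b :: v) + if a = b then binom x v else 0 := rfl

lemma binom_nil_left (v : List α) : binom [] v = if v = [] then 1 else 0 := by
  cases v <;> rfl

lemma binom_cons_left (a : α) (x v : List α) :
    binom (a :: x) v = binom x v + if v.head? = some a then binom x v.tail else 0 := by
  cases v <;> simp [binom_cons_cons, eq_comm]

lemma binom_append (x y u : List α) :
    binom (x ++ y) u =
      ∑ i ∈ range (u.length + 1), binom x (u.take i) * binom y (u.drop i) := by
  induction x generalizing u with
  | nil => cases u <;> simp [binom_nil_left]
  | cons a x ih =>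
    cases u with
    | nil => simp
    | cons b t =>
      simp only [List.cons_append, binom_cons_cons, ih, List.length_cons,
        sum_range_succ' _ (t.length + 1), List.take_succ_cons, List.drop_succ_cons,
        List.take_zero, List.drop_zero, binom_nil_right, add_mul, ite_mul, zero_mul, one_mul,
        sum_add_distrib, sum_ite_irrel, sum_const_zero]
      ring

end Binom

lemma Composition.sum_blocks_eq_sum_cons {M : Type*} [AddCommMonoid M] (n : ℕ)
    (F : List ℕ → M) :
    ∑ c : Composition n, F c.blocks =
      (if n = 0 then F [] else 0) +
        ∑ i ∈ range n, ∑ c : Composition (n - (i + 1)), F ((i + 1) :: c.blocks) := by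
  cases n with
  | zero =>
    have hnil (c : Composition 0) : c.blocks = [] := c.blocks_eq_nil.mpr rfl
    have : Subsingleton (Composition 0) :=
      ⟨fun c d => Composition.ext ((hnil c).trans (hnil d).symm)⟩
    simp [Fintype.sum_subsingleton _ default, hnil]
  | succ k =>
    rw [if_neg k.succ_ne_zero, zero_add, sum_sigma']
    symm
    refine sum_bij (fun x hx => ⟨(x.1 + 1) :: x.2.blocks, ?pos, ?sum⟩) (fun _ _ => mem_univ _)
      ?inj ?surj (fun _ _ => rfl)
    case pos =>
      simpa using fun i hi => x.2.blocks_pos hi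
    case sum =>
      simp only [mem_sigma, mem_range] at hx
      simp only [List.sum_cons, Composition.blocks_sum]
      omega
    case inj =>
      rintro ⟨i, c⟩ _ ⟨j, d⟩ _ h
      simp only [Composition.mk.injEq, List.cons.injEq, add_left_inj] at h
      obtain ⟨rfl, h⟩ := h
      rw [Composition.ext h]
    case surj =>
      intro c _
      obtain ⟨b, t, hbt⟩ := List.exists_cons_of_ne_nil (c.blocks_eq_nil.not.mpr k.succ_ne_zero)
      have hb : 0 < b := c.blocks_pos (by simp [hbt])
      have hsum : b + t.sum = k + 1 := by rw [← List.sum_cons, ← hbt, c.blocks_sum]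
      have ht : t.sum = k + 1 - (b - 1 + 1) := by omega
      refine ⟨⟨b - 1, ⟨t, fun hi => c.blocks_pos (by simp [hbt, hi]), ht⟩⟩, ?_, ?_⟩
      · simp only [mem_sigma, mem_range, mem_univ, and_true]
        omega
      · ext1
        simp only [hbt, Nat.sub_add_cancel hb]

section Morphism

variable {A B : Type*} [DecidableEq B] [Fintype A] (Ψ : A → List B)

def blockSum (g : List A → ℕ) (u : List B) (l : List ℕ) : ℕ :=
  ∑ f : Fin l.length → A,
    (List.zipWith (fun a x => binom (Ψ a) x) (List.ofFn f) (u.splitWrtCompositionAux l)).prod *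
      g (List.ofFn f)

def factorizationSum (g : List A → ℕ) (u : List B) : ℕ :=
  ∑ c : Composition u.length, blockSum Ψ g u c.blocks

lemma blockSum_nil (g : List A → ℕ) (u : List B) : blockSum Ψ g u [] = g [] := by
  simp [blockSum, List.splitWrtCompositionAux]

lemma blockSum_cons (g : List A → ℕ) (u : List B) (n : ℕ) (l : List ℕ) :
    blockSum Ψ g u (n :: l) =
      ∑ a, binom (Ψ a) (u.take n) * blockSum Ψ (fun v => g (a :: v)) (u.drop n) l := by
  rw [blockSum, List.length_cons, ← (Fin.consEquiv fun _ => A).sum_comp, Fintype.sum_prod_type]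
  simp [blockSum, List.ofFn_succ, List.splitWrtCompositionAux_cons, mul_sum, mul_assoc]

lemma factorizationSum_add (g h : List A → ℕ) (u : List B) :
    factorizationSum Ψ (g + h) u = factorizationSum Ψ g u + factorizationSum Ψ h u := by
  simp [factorizationSum, blockSum, mul_add, sum_add_distrib]

@[simp] lemma factorizationSum_zero (u : List B) : factorizationSum Ψ (fun _ => 0) u = 0 := by
  simp [factorizationSum, blockSum]

lemma factorizationSum_ite (p : Prop) [Decidable p] (g : List A → ℕ) (u : List B) :
    factorizationSum Ψ (fun v => if p then g v else 0) u =
      if p then factorizationSum Ψ g u else 0 := by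
  split_ifs <;> simp

lemma factorizationSum_eq_sum_take (g : List A → ℕ) (u : List B) :
    factorizationSum Ψ g u =
      (if u = [] then g [] else 0) +
        ∑ i ∈ range u.length, ∑ a, binom (Ψ a) (u.take (i + 1)) *
          factorizationSum Ψ (fun v => g (a :: v)) (u.drop (i + 1)) := by
  rw [factorizationSum, Composition.sum_blocks_eq_sum_cons, blockSum_nil]
  simp only [List.length_eq_zero_iff, blockSum_cons, factorizationSum, mul_sum]
  refine congrArg _ (sum_congr rfl fun i _ => ?_)
  rw [List.length_drop]
  exact sum_comm

variable [DecidableEq A]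

theorem binom_flatMap (w : List A) (u : List B) :
    binom (w.flatMap Ψ) u = factorizationSum Ψ (binom w) u := by
  induction w generalizing u with
  | nil =>
    rw [factorizationSum_eq_sum_take]
    simp [binom_nil_left]
  | cons a w ih =>
    have hsplit :
        binom (a :: w) = binom w + fun v => if v.head? = some a then binom w v.tail else 0 :=
      funext (binom_cons_left a w)
    rw [List.flatMap_cons, binom_append, sum_range_succ', hsplit, factorizationSum_add, ← ih,
      add_comm, factorizationSum_eq_sum_take]
    simp [factorizationSum_ite, ← ih]

end Morphism

/-- The compositions `c` of `|u|` encode the factorizations `u = u₁ ⋯ u_k` into nonempty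
factors, `u.splitWrtComposition c = [u₁, …, u_k]`, and `f` runs over the tuples of letters
`(a₁, …, a_k)`. -/
theorem binom_morphism_general {A B : Type*} [DecidableEq A] [DecidableEq B] [Fintype A]
    (Ψ : A → List B) (u : List B) (w : List A) :
    binom (w.flatMap Ψ) u =
      ∑ c : Composition u.length, ∑ f : Fin c.length → A,
        (List.zipWith (fun a x => binom (Ψ a) x) (List.ofFn f)
            (u.splitWrtComposition c)).prod * binom w (List.ofFn f) :=
  binom_flatMap Ψ w u

/-- Occurrences of a subword in the image of a word by a non-erasing morphism `Ψ`
(given by its action on letters and extended multiplicatively via `flatMap`).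
The sum over all compositions of `|u|` realizes the double sum over `k` from `1`
to `|u|` and over the ordered factorizations of `u` into `k` nonempty factors;
the sum over `f : Fin c.length → A` realizes the sum over the tuples of letters. -/
theorem binom_morphism {A B : Type*} [DecidableEq A] [DecidableEq B] [Fintype A]
    (Ψ : A → List B) (hΨ : ∀ a : A, Ψ a ≠ [])
    (u : List B) (hu : u ≠ []) (w : List A) (hw : w ≠ []) :
    binom (w.flatMap Ψ) u =
      ∑ c : Composition u.length, ∑ f : Fin c.length → A,
        (List.zipWith (fun a x => binom (Ψ a) x) (List.ofFn f)
            (u.splitWrtComposition c)).prod * binom w (List.ofFn f) :=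
  binom_morphism_general Ψ u w
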